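/- Let $(X,\mu)$ be a probability space, $\Gamma$ a countable group with a pmp action on $X$, and consider the groupoid ring $\mathbb{C}[X\rtimes\Gamma]$ of the transformation groupoid. The algebraic crossed product $L^\infty(X)\rtimes_{\mathrm{alg}}\Gamma$ embeds into $\mathbb{C}[X\rtimes\Gamma]$ via $\iota(\sum_\gamma f_\gamma u_\gamma)=\sum_\gamma(f_\gamma\circ r)\mathbbm{1}_{X\times\{\gamma\}}$, and this embedding has dense image with respect to the rank pseudometric $d_{L^\infty(X)}$; in particular $\iota$ is a $\dim_{L^\infty(X)}$-isomorphism. -/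

import Mathlib

/-!
For `φ ∈ ℂ[X ⋊ Γ]` the range fibres of its support are finite almost everywhere, so almost
every `x` lies in only finitely many of the sets `S_γ = {x | φ (x, γ) ≠ 0}`. The union of the
`S_γ` with `γ` outside a finite set `t` therefore decreases to a null set as `t` grows, and by
continuity from above of the finite measure `μ` it has measure `< ε` for some finite `t`.
Truncating `φ` to the `γ ∈ t` gives an element of the crossed product, and the difference is
supported over that union, so its rank is `< ε`.
-/

open MeasureTheory Set ENNReal

/-- A probability/finite-measure preserving discrete Borel groupoid, presented over
its unit space `X` and arrow space `G`.  `s`, `r` are the source and range maps,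
`unit` is the inclusion of units, `mul` the (partially defined, here totalized)
composition, `inv` the inversion.  Fibers of `s` are countable and every
one-sheeted Borel set induces a `μ`-preserving partial Borel isomorphism
(field `pmp`). -/
structure PMPGroupoid (X G : Type) [MeasurableSpace X] [MeasurableSpace G] where
  μ : Measure X
  finite : IsFiniteMeasure μ
  s : G → X
  r : G → X
  unit : X → G
  mul : G → G → G
  inv : G → G
  meas_s : Measurable s
  meas_r : Measurable r
  meas_unit : Measurable unit
  meas_inv : Measurable inv
  s_unit : ∀ x, s (unit x) = x
  r_unit : ∀ x, r (unit x) = x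
  s_mul : ∀ g h, s g = r h → s (mul g h) = s h
  r_mul : ∀ g h, s g = r h → r (mul g h) = r g
  s_inv : ∀ g, s (inv g) = r g
  r_inv : ∀ g, r (inv g) = s g
  mul_assoc' : ∀ g h k, s g = r h → s h = r k → mul (mul g h) k = mul g (mul h k)
  unit_mul : ∀ g, mul (unit (r g)) g = g
  mul_unit : ∀ g, mul g (unit (s g)) = g
  inv_mul : ∀ g, mul (inv g) g = unit (s g)
  mul_inv : ∀ g, mul g (inv g) = unit (r g)
  countable_fibers : ∀ x, {g | s g = x}.Countable
  pmp : ∀ E : Set G, MeasurableSet E → Set.InjOn s E → Set.InjOn r E →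
      ∀ A : Set X, MeasurableSet A → A ⊆ s '' E → μ (r '' (E ∩ s ⁻¹' A)) = μ A

namespace PMPGroupoid

variable {X G : Type} [MeasurableSpace X] [MeasurableSpace G] (Γ : PMPGroupoid X G)

/-- The fiberwise counting measure `μ^G(B) = ∫_X #(s⁻¹(x) ∩ B) dμ(x)`. -/
noncomputable def fiberMeasure (B : Set G) : ℝ≥0∞ :=
  ∫⁻ x, ({g | Γ.s g = x} ∩ B).encard.toENNReal ∂Γ.μ

/-- A Borel set `E ⊆ G` is one-sheeted if `s` and `r` are injective on `E`. -/
def OneSheeted (E : Set G) : Prop :=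
  MeasurableSet E ∧ Set.InjOn Γ.s E ∧ Set.InjOn Γ.r E

/-- The subgroupoid (with units from `Y`) generated by a set of arrows `A`:
the smallest set of arrows containing `A`, the units over `Y`, and closed under
inversion and (composable) multiplication.  Over `Y = univ` this is exactly
`X ∪ ⋃ {reduced words in A}`. -/
def genOn (Y : Set X) (A : Set G) : Set G :=
  ⋂₀ {S : Set G | A ⊆ S ∧ (∀ x ∈ Y, Γ.unit x ∈ S) ∧ (∀ g ∈ S, Γ.inv g ∈ S) ∧
      ∀ g h, g ∈ S → h ∈ S → Γ.s g = Γ.r h → Γ.mul g h ∈ S}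

/-- The restriction `G↾_Y = s⁻¹(Y) ∩ r⁻¹(Y)` of the groupoid to a Borel set `Y ⊆ X`. -/
def restrictSet (Y : Set X) : Set G := Γ.s ⁻¹' Y ∩ Γ.r ⁻¹' Y

/-- A graphing of the restricted groupoid `G↾_Y`: a countable family of one-sheeted
sets inside `G↾_Y` generating it up to a `μ^G`-null set. -/
def IsGraphingOn (Y : Set X) (𝓔 : ℕ → Set G) : Prop :=
  (∀ i, Γ.OneSheeted (𝓔 i) ∧ 𝓔 i ⊆ Γ.restrictSet Y) ∧
    Γ.fiberMeasure (Γ.restrictSet Y \ Γ.genOn Y (⋃ i, 𝓔 i)) = 0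

/-- The cost `C_μ(𝓔) = ∑_E μ^G(E)` of a graphing. -/
noncomputable def graphingCost (𝓔 : ℕ → Set G) : ℝ≥0∞ :=
  ∑' i, Γ.fiberMeasure (𝓔 i)

/-- The cost of the restriction `G↾_Y`. -/
noncomputable def costOn (Y : Set X) : ℝ≥0∞ :=
  ⨅ (𝓔 : ℕ → Set G) (_ : Γ.IsGraphingOn Y 𝓔), Γ.graphingCost 𝓔

/-- A graphing of `G`. -/
def IsGraphing (𝓔 : ℕ → Set G) : Prop := Γ.IsGraphingOn Set.univ 𝓔

/-- The cost `C_μ(G)` of the groupoid: the infimum of costs of graphings. -/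
noncomputable def cost : ℝ≥0∞ := Γ.costOn Set.univ

/-- A Borel subset `A ⊆ X` is `G`-invariant if `r(s⁻¹(A)) ⊆ A`. -/
def Invariant (A : Set X) : Prop := ∀ g, Γ.s g ∈ A → Γ.r g ∈ A

/-- A Borel subset `A ⊆ G` is generating if the subgroupoid it generates
(together with all units) is `μ^G`-conull. -/
def IsGeneratingSet (A : Set G) : Prop :=
  Γ.fiberMeasure (Γ.genOn Set.univ A)ᶜ = 0

/-- Inversion of a set of arrows. -/
def setInv (A : Set G) : Set G := Γ.inv '' A

/-- Product of two sets of arrows (products of composable pairs). -/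
def setMul (A B : Set G) : Set G :=
  {g | ∃ a ∈ A, ∃ b ∈ B, Γ.s a = Γ.r b ∧ g = Γ.mul a b}

/-- The signed letter `E_i^{±1}` of a family `𝓔`. -/
def letterSet (𝓔 : ℕ → Set G) (p : ℕ × Bool) : Set G :=
  if p.2 then 𝓔 p.1 else Γ.setInv (𝓔 p.1)

/-- The set of values of a word `E_{i_1}^{ε_1} ⋯ E_{i_n}^{ε_n}` in the family `𝓔`. -/
def wordProd (𝓔 : ℕ → Set G) : List (ℕ × Bool) → Set G
  | [] => Set.range Γ.unit
  | p :: l => Γ.setMul (Γ.letterSet 𝓔 p) (wordProd 𝓔 l)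

/-- A word is reduced if no letter is immediately followed by its inverse. -/
def ReducedWord (l : List (ℕ × Bool)) : Prop :=
  l.Chain' fun p q => p.1 ≠ q.1 ∨ p.2 = q.2

/-- A treeing: a countable family of one-sheeted sets such that every nonempty
reduced word meets the unit space in a `μ^G`-null set. -/
def IsTreeing (𝓔 : ℕ → Set G) : Prop :=
  (∀ i, Γ.OneSheeted (𝓔 i)) ∧
    ∀ l : List (ℕ × Bool), l ≠ [] → ReducedWord l →
      Γ.fiberMeasure (Γ.wordProd 𝓔 l ∩ Set.range Γ.unit) = 0

/-- A groupoid is treeable if it admits a graphing which is a treeing. -/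
def Treeable : Prop := ∃ 𝓔 : ℕ → Set G, Γ.IsGraphing 𝓔 ∧ Γ.IsTreeing 𝓔

/-- The rank (pseudo)norm of `f : G → ℂ` as an element of the left
`L^∞(X)`-module `ℂ[G]`: the infimal measure of a Borel set `Z ⊆ X` such that
`𝟙_Z · f = f` up to `μ^G`-null sets. -/
noncomputable def rankNorm (f : G → ℂ) : ℝ≥0∞ :=
  ⨅ (Z : Set X) (_ : MeasurableSet Z ∧ Γ.fiberMeasure {g | f g ≠ 0 ∧ Γ.r g ∉ Z} = 0), Γ.μ Z

/-- Membership in the groupoid ring `ℂ[G]`: bounded measurable functions whose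
fiberwise supports (for both `s` and `r`) have essentially bounded cardinality. -/
def MemGroupoidRing (f : G → ℂ) : Prop :=
  Measurable f ∧ (∃ C : ℝ, ∀ g, ‖f g‖ ≤ C) ∧
    ∃ N : ℕ, ∀ᵐ x ∂Γ.μ, {g | Γ.s g = x ∧ f g ≠ 0}.encard ≤ (N : ℕ∞) ∧
      {g | Γ.r g = x ∧ f g ≠ 0}.encard ≤ (N : ℕ∞)

end PMPGroupoid

open Filter Topology

lemma Set.iInter_finset_iUnion_compl_eq {X ι : Type*} (S : ι → Set X) :
    ⋂ t : Finset ι, ⋃ i ∉ t, S i = {x | {i | x ∈ S i}.Infinite} := by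
  ext x
  simp only [mem_iInter, mem_iUnion, exists_prop, mem_ofPred_eq]
  refine ⟨fun h hfin => ?_, fun h t => ?_⟩
  · obtain ⟨i, hi, hx⟩ := h hfin.toFinset
    exact hi (hfin.mem_toFinset.2 hx)
  · obtain ⟨i, hx, hi⟩ := (h.sdiff t.finite_toSet).nonempty
    exact ⟨i, hi, hx⟩

theorem MeasureTheory.exists_finset_measure_iUnion_compl_lt {X ι : Type*} [MeasurableSpace X]
    [Countable ι] {μ : Measure X} [IsFiniteMeasure μ] {S : ι → Set X}
    (hS : ∀ i, MeasurableSet (S i)) (hfin : ∀ᵐ x ∂μ, {i | x ∈ S i}.Finite)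
    {ε : ℝ≥0∞} (hε : 0 < ε) : ∃ t : Finset ι, μ (⋃ i ∉ t, S i) < ε := by
  set T : Finset ι → Set X := fun t => ⋃ i ∉ t, S i
  have hanti : Antitone T :=
    fun t t' htt' => biUnion_mono (fun i hi hit => hi (htt' hit)) fun _ _ => le_rfl
  have hnull : μ (⋂ t, T t) = 0 := by
    rw [iInter_finset_iUnion_compl_eq]
    exact ae_iff.1 hfin
  have htendsto : Tendsto (μ ∘ T) atTop (𝓝 0) := hnull ▸ tendsto_measure_iInter_atTop
    (fun t => (MeasurableSet.biUnion (to_countable _) fun i _ => hS i).nullMeasurableSet)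
    hanti ⟨∅, measure_ne_top μ _⟩
  exact (htendsto.eventually (gt_mem_nhds hε)).exists

namespace PMPGroupoid

variable {X G : Type} [MeasurableSpace X] [MeasurableSpace G] {Γ : PMPGroupoid X G}

theorem rankNorm_le_measure {f : G → ℂ} {Z : Set X} (hZ : MeasurableSet Z)
    (hf : ∀ g, f g ≠ 0 → Γ.r g ∈ Z) : Γ.rankNorm f ≤ Γ.μ Z := by
  have hempty : {g | f g ≠ 0 ∧ Γ.r g ∉ Z} = ∅ :=
    eq_empty_of_forall_notMem fun g hg => hg.2 (hf g hg.1)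
  refine iInf₂_le Z ⟨hZ, ?_⟩
  simp [fiberMeasure, hempty]

theorem MemGroupoidRing.ae_finite_rFiber {f : G → ℂ} (hf : Γ.MemGroupoidRing f) :
    ∀ᵐ x ∂Γ.μ, {g | Γ.r g = x ∧ f g ≠ 0}.Finite := by
  obtain ⟨-, -, N, hN⟩ := hf
  filter_upwards [hN] with x hx using finite_of_encard_le_coe hx.2

end PMPGroupoid

open PMPGroupoid in
theorem crossed_product_rank_dense_general
    {X : Type} [MeasurableSpace X] (Γgrp : Type) [Countable Γgrp]
    [MeasurableSpace Γgrp]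
    (Γ : PMPGroupoid X (X × Γgrp))
    (hr : Γ.r = fun p => p.1) :
    Function.Injective
        (fun (F : Γgrp →₀ (X → ℂ)) => fun p : X × Γgrp => F p.2 p.1) ∧
      ∀ φ : X × Γgrp → ℂ, Γ.MemGroupoidRing φ → ∀ ε : ℝ≥0∞, 0 < ε →
        ∃ F : Γgrp →₀ (X → ℂ), Γ.rankNorm (fun p => φ p - F p.2 p.1) < ε := by
  refine ⟨fun F F' h => ?_, fun φ hφ ε hε => ?_⟩
  · ext γ x
    exact congrFun h (x, γ)
  have := Γ.finite
  set S : Γgrp → Set X := fun γ => {x | φ (x, γ) ≠ 0}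
  have hS : ∀ γ, MeasurableSet (S γ) :=
    fun γ => measurableSet_support (hφ.1.comp measurable_prodMk_right)
  have hfin : ∀ᵐ x ∂Γ.μ, {γ | x ∈ S γ}.Finite := by
    filter_upwards [hφ.ae_finite_rFiber] with x hx
    refine (hx.preimage (Prod.mk_right_injective x).injOn).subset fun γ hγ => ?_
    exact ⟨by rw [hr], hγ⟩
  obtain ⟨t, ht⟩ := exists_finset_measure_iUnion_compl_lt hS hfin hε
  classical
  refine ⟨Finsupp.indicator t fun γ _ x => φ (x, γ), (rankNorm_le_measure
    (MeasurableSet.biUnion (to_countable _) fun γ _ => hS γ) ?_).trans_lt ht⟩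
  rintro ⟨x, γ⟩ hne
  by_cases hγ : γ ∈ t
  · simp [Finsupp.indicator_of_mem hγ] at hne
  · simp only [Finsupp.indicator_of_notMem hγ, Pi.zero_apply, sub_zero] at hne
    rw [hr]
    exact mem_biUnion hγ hne

open PMPGroupoid in
/-- For a pmp action of a countable group `Γgrp` on `(X,μ)` with
transformation groupoid `X ⋊ Γgrp`, the algebraic crossed product
`L^∞(X) ⋊_alg Γgrp` embeds into the groupoid ring `ℂ[X ⋊ Γgrp]` via
`ι(∑_γ f_γ u_γ) = ∑_γ (f_γ ∘ r)·𝟙_{X×{γ}}`, i.e. `ι(F)(x,γ) = F γ x`, and this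
embedding is injective with `d_{L^∞(X)}`-dense image (hence it is a
`dim_{L^∞(X)}`-isomorphism). -/
theorem crossed_product_rank_dense
    {X : Type} [MeasurableSpace X] (Γgrp : Type) [Group Γgrp] [Countable Γgrp]
    [MeasurableSpace Γgrp]
    (a : X → Γgrp → X)
    (ha_one : ∀ x, a x 1 = x)
    (ha_mul : ∀ x g h, a (a x g) h = a x (g * h))
    (Γ : PMPGroupoid X (X × Γgrp))
    (hprob : MeasureTheory.IsProbabilityMeasure Γ.μ)
    (hs : Γ.s = fun p => a p.1 p.2)
    (hr : Γ.r = fun p => p.1)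
    (hunit : Γ.unit = fun x => (x, 1))
    (hmul : ∀ p q : X × Γgrp, Γ.s p = Γ.r q → Γ.mul p q = (p.1, p.2 * q.2)) :
    Function.Injective
        (fun (F : Γgrp →₀ (X → ℂ)) => fun p : X × Γgrp => F p.2 p.1) ∧
      ∀ φ : X × Γgrp → ℂ, Γ.MemGroupoidRing φ → ∀ ε : ℝ≥0∞, 0 < ε →
        ∃ F : Γgrp →₀ (X → ℂ), Γ.rankNorm (fun p => φ p - F p.2 p.1) < ε :=
  crossed_product_rank_dense_general Γgrp Γ hr
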